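/- If S and T are subsets of the vertex set Ω of an association scheme whose dual degree sets are disjoint (i.e., they are design-orthogonal), then |S ∩ T| = |S|·|T|/|Ω|. -/

import Mathlib

open Matrix Finset

/-- The characteristic (row) vector of a finite set of vertices. -/
def chi {Ω : Type*} [DecidableEq Ω] (C : Finset Ω) : Ω → ℝ :=
  fun x => if x ∈ C then 1 else 0

/-- The dual degree set of a subset `C` of the vertex set of an association scheme
with minimal idempotents `E j`: the set of nonzero indices `j` with
`χ_C E_j χ_C^T ≠ 0`. -/
def dualDegreeSet {Ω : Type*} [Fintype Ω] [DecidableEq Ω] {d : ℕ}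
    (E : Fin (d + 1) → Matrix Ω Ω ℝ) (C : Finset Ω) : Set (Fin (d + 1)) :=
  {j | j ≠ 0 ∧ chi C ⬝ᵥ (E j).mulVec (chi C) ≠ 0}

/-! Since `∑ E_j = 1`, `|S ∩ T| = χ_S · χ_T = ∑_j χ_S E_j χ_T`. Each `j ≠ 0` misses the dual
degree set of `S` or of `T`, say of `S`; as `E_j` is positive semidefinite, `χ_S E_j χ_S = 0`
forces `E_j χ_S = 0`, so the mixed term vanishes. Only `j = 0` survives, and
`χ_S E_0 χ_T = |S| |T| / |Ω|`. -/

namespace Matrix.PosSemidef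

open scoped ComplexOrder

variable {n 𝕜 : Type*} [Fintype n] [RCLike 𝕜] {A : Matrix n n 𝕜}

theorem dotProduct_mulVec_eq_zero_of_left (hA : A.PosSemidef) {u : n → 𝕜}
    (hu : star u ⬝ᵥ A *ᵥ u = 0) (v : n → 𝕜) : star u ⬝ᵥ A *ᵥ v = 0 := by
  have hAu : A *ᵥ u = 0 := (hA.dotProduct_mulVec_zero_iff u).mp hu
  rw [dotProduct_mulVec, ← hA.isHermitian.eq, ← star_mulVec, hAu, star_zero, zero_dotProduct]

theorem dotProduct_mulVec_eq_zero_of_right (hA : A.PosSemidef) (u : n → 𝕜) {v : n → 𝕜}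
    (hv : star v ⬝ᵥ A *ᵥ v = 0) : star u ⬝ᵥ A *ᵥ v = 0 := by
  rw [(hA.dotProduct_mulVec_zero_iff v).mp hv, dotProduct_zero]

end Matrix.PosSemidef

theorem Matrix.dotProduct_of_one_mulVec {n α : Type*} [Fintype n] [CommSemiring α]
    (u v : n → α) : u ⬝ᵥ of (fun _ _ : n => (1 : α)) *ᵥ v = (∑ i, u i) * ∑ i, v i := by
  simp [dotProduct, mulVec, Finset.sum_mul]

section chi

variable {Ω : Type*} [DecidableEq Ω]

theorem chi_mul_chi (S T : Finset Ω) : chi S * chi T = chi (S ∩ T) := by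
  ext x
  by_cases hS : x ∈ S <;> by_cases hT : x ∈ T <;> simp [chi, hS, hT]

variable [Fintype Ω]

theorem sum_chi (C : Finset Ω) : ∑ x, chi C x = #C := by
  simp [chi]

theorem chi_dotProduct_chi (S T : Finset Ω) : chi S ⬝ᵥ chi T = #(S ∩ T) := by
  rw [dotProduct, ← sum_chi]
  exact Finset.sum_congr rfl fun x _ => congrFun (chi_mul_chi S T) x

theorem chi_dotProduct_mulVec_chi_eq_zero_of_disjoint {d : ℕ} {E : Fin (d + 1) → Matrix Ω Ω ℝ}
    (hpsd : ∀ j, (E j).PosSemidef) {S T : Finset Ω}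
    (horth : Disjoint (dualDegreeSet E S) (dualDegreeSet E T)) {j : Fin (d + 1)} (hj : j ≠ 0) :
    chi S ⬝ᵥ E j *ᵥ chi T = 0 := by
  have hST : j ∉ dualDegreeSet E S ∨ j ∉ dualDegreeSet E T := by
    by_contra! h
    exact horth.ne_of_mem h.1 h.2 rfl
  simp only [dualDegreeSet, Set.mem_ofPred_eq, ne_eq, hj, not_false_eq_true, true_and,
    not_not] at hST
  rcases hST with hS | hT
  · simpa using
      (hpsd j).dotProduct_mulVec_eq_zero_of_left (u := chi S) (by simpa using hS) (chi T)
  · simpa using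
      (hpsd j).dotProduct_mulVec_eq_zero_of_right (chi S) (v := chi T) (by simpa using hT)

end chi

theorem roos_design_orthogonal_general {Ω : Type*} [Fintype Ω] [DecidableEq Ω]
    {d : ℕ} (E : Fin (d + 1) → Matrix Ω Ω ℝ)
    (hsum : ∑ j, E j = 1)
    (hE0 : E 0 = (Fintype.card Ω : ℝ)⁻¹ • Matrix.of (fun _ _ => (1 : ℝ)))
    (hpsd : ∀ j, (E j).PosSemidef)
    (S T : Finset Ω)
    (horth : Disjoint (dualDegreeSet E S) (dualDegreeSet E T)) :
    ((S ∩ T).card : ℝ) = (S.card : ℝ) * (T.card : ℝ) / (Fintype.card Ω : ℝ) := by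
  calc ((S ∩ T).card : ℝ) = chi S ⬝ᵥ (∑ j, E j) *ᵥ chi T := by
        rw [hsum, one_mulVec, chi_dotProduct_chi]
    _ = ∑ j, chi S ⬝ᵥ E j *ᵥ chi T := by rw [sum_mulVec, dotProduct_sum]
    _ = chi S ⬝ᵥ E 0 *ᵥ chi T :=
        Finset.sum_eq_single_of_mem 0 (mem_univ 0) fun j _ hj =>
          chi_dotProduct_mulVec_chi_eq_zero_of_disjoint hpsd horth hj
    _ = (S.card : ℝ) * (T.card : ℝ) / (Fintype.card Ω : ℝ) := by
        rw [hE0, smul_mulVec, dotProduct_smul, dotProduct_of_one_mulVec, sum_chi, sum_chi,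
          smul_eq_mul, inv_mul_eq_div]

/-- Roos' theorem: if `S` and `T` are design-orthogonal (their dual degree sets are
disjoint) subsets of the vertex set `Ω` of a symmetric association scheme with
minimal idempotents `E_0 = |Ω|⁻¹ J, E_1, …, E_d`, then `|S ∩ T| = |S|·|T|/|Ω|`. -/
theorem roos_design_orthogonal {Ω : Type*} [Fintype Ω] [DecidableEq Ω] [Nonempty Ω]
    {d : ℕ} (E : Fin (d + 1) → Matrix Ω Ω ℝ)
    (hsum : ∑ j, E j = 1)
    (hE0 : E 0 = (Fintype.card Ω : ℝ)⁻¹ • Matrix.of (fun _ _ => (1 : ℝ)))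
    (hpsd : ∀ j, (E j).PosSemidef)
    (S T : Finset Ω)
    (horth : Disjoint (dualDegreeSet E S) (dualDegreeSet E T)) :
    ((S ∩ T).card : ℝ) = (S.card : ℝ) * (T.card : ℝ) / (Fintype.card Ω : ℝ) :=
  roos_design_orthogonal_general E hsum hE0 hpsd S T horth
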